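/- arXiv:2307.10852 — 6 statements merged into one kernel-verified Lean document; each statement's English description precedes it below -/
import Mathlib

section
/- Let P ⊆ ℝⁿ be a lattice polytope with the integer decomposition property (IDP) whose dimension d (the rank of the ℝ-vector space spanned by differences of points of P) satisfies d ≥ 2. Set N₁ = #(P ∩ ℤⁿ) and N₂ = #(2P ∩ ℤⁿ). Then, as integers, (N₁ − (d+1))² ≥ N₂ − (d+1)·N₁ + d(d+1)/2. (Equivalently, the first three coefficients h₀ = 1, h₁ = N₁ − (d+1), h₂ = N₂ − (d+1)N₁ + C(d+1,2) of the h*-vector of P satisfy h₁² ≥ h₀h₂.) -/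
open scoped Pointwise

/-- If `P ⊆ ℝⁿ` is an IDP lattice polytope of dimension `d ≥ 2`, with
`N₁ = #(P ∩ ℤⁿ)` and `N₂ = #(2P ∩ ℤⁿ)`, then, as integers,
`(N₁ − (d+1))² ≥ N₂ − (d+1)·N₁ + C(d+1, 2)`; i.e. `h₁² ≥ h₀h₂` for the initial
`h*`-coefficients of `P`. -/
theorem idp_hstar_initial_log_concave
    (n : ℕ) (V : Finset (Fin n → ℤ)) (hV : V.Nonempty)
    (P : Set (Fin n → ℝ))
    (hP : P = convexHull ℝ ((fun v : Fin n → ℤ => fun i => (v i : ℝ)) '' (V : Set (Fin n → ℤ))))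
    (hIDP : ∀ k : ℕ, 1 ≤ k → ∀ p : Fin n → ℤ,
      (fun i => (p i : ℝ)) ∈ (k : ℝ) • P →
      ∃ f : Fin k → (Fin n → ℤ),
        (∀ j, (fun i => (f j i : ℝ)) ∈ P) ∧ p = ∑ j, f j)
    (d : ℕ) (hd : d = Module.finrank ℝ (vectorSpan ℝ P)) (hd2 : 2 ≤ d)
    (N₁ N₂ : ℤ)
    (hN₁ : N₁ = ({p : Fin n → ℤ | (fun i => (p i : ℝ)) ∈ P}.ncard : ℤ))
    (hN₂ : N₂ = ({p : Fin n → ℤ | (fun i => (p i : ℝ)) ∈ (2 : ℝ) • P}.ncard : ℤ)) :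
    (N₁ - ((d : ℤ) + 1)) ^ 2 ≥ N₂ - ((d : ℤ) + 1) * N₁ + ((d + 1).choose 2 : ℤ) := by
  classical
  set S : Set (Fin n → ℤ) := {p | (fun i => (p i : ℝ)) ∈ P} with hSdef
  set T : Set (Fin n → ℤ) := {p | (fun i => (p i : ℝ)) ∈ (2 : ℝ) • P} with hTdef
  -- coordinatewise bounds on P
  have hPsub : P ⊆ Set.pi Set.univ (fun i =>
      Set.Icc ((V.inf' hV fun v => v i : ℤ) : ℝ) ((V.sup' hV fun v => v i : ℤ) : ℝ)) := by
    rw [hP]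
    apply convexHull_min
    · rintro x ⟨v, hv, rfl⟩ i _
      refine ⟨?_, ?_⟩
      · show ((V.inf' hV fun v => v i : ℤ) : ℝ) ≤ ((v i : ℤ) : ℝ)
        exact_mod_cast Finset.inf'_le (fun v => v i) hv
      · show ((v i : ℤ) : ℝ) ≤ ((V.sup' hV fun v => v i : ℤ) : ℝ)
        exact_mod_cast Finset.le_sup' (fun v => v i) hv
    · exact convex_pi fun i _ => convex_Icc _ _
  have hSfin : S.Finite := by
    apply Set.Finite.subset
      (Set.Finite.pi fun i => Set.finite_Icc (V.inf' hV fun v => v i) (V.sup' hV fun v => v i))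
    intro p hp i _
    have h := hPsub hp i (Set.mem_univ i)
    exact ⟨by exact_mod_cast h.1, by exact_mod_cast h.2⟩
  -- IDP at k = 2
  have hdecomp : ∀ p ∈ T, ∃ a ∈ S, ∃ b ∈ S, p = a + b := by
    intro p hp
    obtain ⟨f, hf, hsum⟩ := hIDP 2 (by norm_num) p (by
      have h2 : ((2 : ℕ) : ℝ) = (2 : ℝ) := by norm_num
      rw [h2]; exact hp)
    exact ⟨f 0, hf 0, f 1, hf 1, by rw [hsum, Fin.sum_univ_two]⟩
  have hTfin : T.Finite := by
    apply Set.Finite.subset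
      (Set.Finite.image (fun q : (Fin n → ℤ) × (Fin n → ℤ) => q.1 + q.2) (hSfin.prod hSfin))
    intro p hp
    obtain ⟨a, ha, b, hb, rfl⟩ := hdecomp p hp
    exact ⟨(a, b), ⟨ha, hb⟩, rfl⟩
  set A := hSfin.toFinset with hA
  set B := hTfin.toFinset with hB
  have hcard : B.card ≤ (A.card + 1).choose 2 := by
    have : B.card ≤ (A.sym2.image
        (Sym2.lift ⟨fun a b => a + b, fun a b => add_comm a b⟩)).card := by
      apply Finset.card_le_card
      intro p hp
      obtain ⟨a, ha, b, hb, rfl⟩ := hdecomp p (by simpa [hB] using hp)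
      exact Finset.mem_image.2 ⟨s(a, b),
        Finset.mk_mem_sym2_iff.2 ⟨by simpa [hA] using ha, by simpa [hA] using hb⟩, by simp⟩
    calc B.card ≤ _ := this
      _ ≤ A.sym2.card := Finset.card_image_le
      _ = (A.card + 1).choose 2 := Finset.card_sym2 A
  -- translate to integers
  have hN₁' : N₁ = (A.card : ℤ) := by rw [hN₁, Set.ncard_eq_toFinset_card _ hSfin]
  have hN₂' : N₂ = (B.card : ℤ) := by rw [hN₂, Set.ncard_eq_toFinset_card _ hTfin]
  have hch : ∀ m : ℕ, ((m + 1).choose 2 : ℤ) * 2 = (m + 1) * m := by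
    intro m
    have hdvd : 2 ∣ (m + 1) * m := by
      rcases Nat.even_or_odd m with h | h
      · exact Dvd.dvd.mul_left h.two_dvd _
      · exact Dvd.dvd.mul_right (h.add_one).two_dvd _
    have : (m + 1).choose 2 * 2 = (m + 1) * m := by
      rw [Nat.choose_two_right, Nat.add_sub_cancel, Nat.div_mul_cancel hdvd]
    exact_mod_cast this
  have h2N₂ : 2 * N₂ ≤ N₁ * (N₁ + 1) := by
    have := hch A.card
    have hc : (B.card : ℤ) ≤ ((A.card + 1).choose 2 : ℤ) := by exact_mod_cast hcard
    rw [hN₁', hN₂']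
    nlinarith [this, hc]
  have hchd := hch d
  have hm : (0 : ℤ) ≤ (N₁ - ((d : ℤ) + 1)) * (N₁ - ((d : ℤ) + 1) - 1) := by
    rcases le_or_gt 1 (N₁ - ((d : ℤ) + 1)) with h | h
    · exact mul_nonneg (by linarith) (by linarith)
    · have h1 : (0 : ℤ) ≤ -(N₁ - ((d : ℤ) + 1)) := by omega
      have h2 : (0 : ℤ) ≤ -(N₁ - ((d : ℤ) + 1) - 1) := by omega
      nlinarith [mul_nonneg h1 h2]
  have hgoal : ((d + 1).choose 2 : ℤ) * 2 = ((d : ℤ) + 1) * d := by exact_mod_cast hchd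
  nlinarith [h2N₂, hm, hgoal]
end

section
/- Let d ≥ 1 and let h₀, h₁, …, h_d be positive real numbers forming a log-concave sequence, i.e. h_i² ≥ h_{i−1}·h_{i+1} for all 1 ≤ i ≤ d−1. For each natural number m define a_m = Σ_{i=0}^{d} h_i · C(m + d − i, d), where C(·,·) is the binomial coefficient. Then the sequence (a_m)_{m≥0} is log-concave: a_m > 0 for all m and a_m² ≥ a_{m−1}·a_{m+1} for all m ≥ 1. (In Ehrhart-theoretic terms: if the h*-polynomial of a polytope is log-concave, then the sequence of evaluations E_P(0), E_P(1), E_P(2), … of its Ehrhart polynomial is log-concave.) -/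
open Finset

private def psum (x : ℕ → ℝ) (m : ℕ) : ℝ := ∑ k ∈ Finset.range (m + 1), x k

private lemma psum_succ (x : ℕ → ℝ) (m : ℕ) : psum x (m + 1) = psum x m + x (m + 1) :=
  Finset.sum_range_succ x (m + 1)

private lemma psum_nonneg (x : ℕ → ℝ) (hx : ∀ k, 0 ≤ x k) (m : ℕ) : 0 ≤ psum x m :=
  Finset.sum_nonneg fun k _ => hx k

private lemma spread (x : ℕ → ℝ)
    (hrd : ∀ u v, u ≤ v → x u * x (v + 1) ≤ x (u + 1) * x v) :
    ∀ (k m a : ℕ), x a * x (a + 2 * k + m) ≤ x (a + k) * x (a + k + m) := by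
  intro k
  induction k with
  | zero => intro m a; norm_num
  | succ k ih =>
    intro m a
    have h1 := hrd a (a + 2 * k + 1 + m) (by omega)
    have e1 : a + 2 * k + 1 + m + 1 = a + 2 * (k + 1) + m := by ring
    rw [e1] at h1
    have h2 := ih m (a + 1)
    have e2 : a + 1 + 2 * k + m = a + 2 * k + 1 + m := by ring
    have e3 : a + 1 + k = a + (k + 1) := by ring
    rw [e2, e3] at h2
    exact h1.trans h2

private lemma spread' (x : ℕ → ℝ)
    (hrd : ∀ u v, u ≤ v → x u * x (v + 1) ≤ x (u + 1) * x v)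
    {a b c d : ℕ} (h1 : a ≤ c) (h2 : a ≤ d) (h3 : a + b = c + d) :
    x a * x b ≤ x c * x d := by
  rcases le_total c d with hcd | hcd
  · obtain ⟨k, rfl⟩ : ∃ k, c = a + k := ⟨c - a, by omega⟩
    obtain ⟨m, rfl⟩ : ∃ m, d = a + k + m := ⟨d - (a + k), by omega⟩
    obtain rfl : b = a + 2 * k + m := by omega
    exact spread x hrd k m a
  · rw [mul_comm (x c)]
    obtain ⟨k, rfl⟩ : ∃ k, d = a + k := ⟨d - a, by omega⟩
    obtain ⟨m, rfl⟩ : ∃ m, c = a + k + m := ⟨c - (a + k), by omega⟩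
    obtain rfl : b = a + 2 * k + m := by omega
    exact spread x hrd k m a

private lemma psum_rd (x : ℕ → ℝ) (hx : ∀ k, 0 ≤ x k)
    (hrd : ∀ u v, u ≤ v → x u * x (v + 1) ≤ x (u + 1) * x v) :
    ∀ u v, u ≤ v → psum x u * psum x (v + 1) ≤ psum x (u + 1) * psum x v := by
  intro u v huv
  have key : psum x u * x (v + 1) ≤ x (u + 1) * psum x v := by
    calc psum x u * x (v + 1) = ∑ j ∈ Finset.range (u + 1), x j * x (v + 1) := by
          rw [psum, Finset.sum_mul]
      _ ≤ ∑ j ∈ Finset.range (u + 1), x (u + 1) * x (v - u + j) := by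
          apply Finset.sum_le_sum
          intro j hj
          have hju : j ≤ u := Nat.lt_succ_iff.mp (Finset.mem_range.mp hj)
          exact spread' x hrd (by omega) (by omega) (by omega)
      _ = ∑ k ∈ Finset.Ico (v - u) (v + 1), x (u + 1) * x k := by
          rw [Finset.sum_Ico_eq_sum_range, show v + 1 - (v - u) = u + 1 from by omega]
      _ ≤ ∑ k ∈ Finset.range (v + 1), x (u + 1) * x k := by
          apply Finset.sum_le_sum_of_subset_of_nonneg
          · intro k hk
            simp only [Finset.mem_Ico, Finset.mem_range] at hk ⊢
            omega
          · intro k _ _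
            exact mul_nonneg (hx _) (hx _)
      _ = x (u + 1) * psum x v := by rw [psum, Finset.mul_sum]
  have e1 := psum_succ x u
  have e2 := psum_succ x v
  have h0u := psum_nonneg x hx u
  have h0v := psum_nonneg x hx v
  nlinarith [key]

private lemma psum_choose (g : ℕ → ℝ) (e : ℕ) :
    ∀ m, ∑ m' ∈ Finset.range (m + 1), ∑ k ∈ Finset.range (m' + 1),
        g k * (((m' - k + e).choose e : ℕ) : ℝ)
      = ∑ k ∈ Finset.range (m + 1), g k * (((m - k + e + 1).choose (e + 1) : ℕ) : ℝ) := by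
  intro m
  induction m with
  | zero => simp
  | succ m ih =>
    rw [Finset.sum_range_succ
      (fun m' => ∑ k ∈ Finset.range (m' + 1), g k * (((m' - k + e).choose e : ℕ) : ℝ)), ih]
    have p2 : ∑ k ∈ Finset.range (m + 1 + 1), g k * (((m + 1 - k + e).choose e : ℕ) : ℝ)
        = ∑ k ∈ Finset.range (m + 1), g k * (((m + 1 - k + e).choose e : ℕ) : ℝ) + g (m + 1) := by
      rw [Finset.sum_range_succ]
      simp [Nat.sub_self]
    have p3 : ∑ k ∈ Finset.range (m + 1 + 1), g k * (((m + 1 - k + e + 1).choose (e + 1) : ℕ) : ℝ)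
        = ∑ k ∈ Finset.range (m + 1), g k * (((m + 1 - k + e + 1).choose (e + 1) : ℕ) : ℝ)
          + g (m + 1) := by
      rw [Finset.sum_range_succ]
      simp [Nat.sub_self]
    rw [p2, p3]
    have main : ∑ k ∈ Finset.range (m + 1), g k * (((m - k + e + 1).choose (e + 1) : ℕ) : ℝ)
        + ∑ k ∈ Finset.range (m + 1), g k * (((m + 1 - k + e).choose e : ℕ) : ℝ)
        = ∑ k ∈ Finset.range (m + 1), g k * (((m + 1 - k + e + 1).choose (e + 1) : ℕ) : ℝ) := by
      rw [← Finset.sum_add_distrib]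
      apply Finset.sum_congr rfl
      intro k hk
      have hk' : k ≤ m := Nat.lt_succ_iff.mp (Finset.mem_range.mp hk)
      have q1 : m + 1 - k + e + 1 = (m - k + e + 1) + 1 := by omega
      have q2 : m + 1 - k + e = m - k + e + 1 := by omega
      rw [q1, q2, Nat.choose_succ_succ (m - k + e + 1) e]
      push_cast
      ring
    linarith [main]

private def itps (x : ℕ → ℝ) : ℕ → ℕ → ℝ
  | 0 => psum x
  | e + 1 => psum (itps x e)

private lemma itps_nonneg (x : ℕ → ℝ) (hx : ∀ k, 0 ≤ x k) : ∀ e k, 0 ≤ itps x e k := by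
  intro e
  induction e with
  | zero => exact psum_nonneg x hx
  | succ e ih => exact psum_nonneg _ ih

private lemma itps_rd (x : ℕ → ℝ) (hx : ∀ k, 0 ≤ x k)
    (hrd : ∀ u v, u ≤ v → x u * x (v + 1) ≤ x (u + 1) * x v) :
    ∀ e u v, u ≤ v → itps x e u * itps x e (v + 1) ≤ itps x e (u + 1) * itps x e v := by
  intro e
  induction e with
  | zero => exact psum_rd x hx hrd
  | succ e ih => exact psum_rd _ (itps_nonneg x hx e) ih

private lemma itps_eq (x : ℕ → ℝ) :
    ∀ e m, itps x e m = ∑ k ∈ Finset.range (m + 1), x k * (((m - k + e).choose e : ℕ) : ℝ) := by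
  intro e
  induction e with
  | zero => intro m; simp [itps, psum]
  | succ e ih =>
    intro m
    show psum (itps x e) m = _
    rw [psum]
    calc ∑ m' ∈ Finset.range (m + 1), itps x e m'
        = ∑ m' ∈ Finset.range (m + 1), ∑ k ∈ Finset.range (m' + 1),
            x k * (((m' - k + e).choose e : ℕ) : ℝ) :=
          Finset.sum_congr rfl (fun m' _ => ih m')
      _ = ∑ k ∈ Finset.range (m + 1), x k * (((m - k + e + 1).choose (e + 1) : ℕ) : ℝ) :=
          psum_choose x e m
      _ = ∑ k ∈ Finset.range (m + 1), x k * (((m - k + (e + 1)).choose (e + 1) : ℕ) : ℝ) := by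
          apply Finset.sum_congr rfl
          intro k _
          rw [Nat.add_assoc]

/-- If `h₀, …, h_d` (`d ≥ 1`) is a positive log-concave sequence of reals
and `a_m = Σ_{i=0}^d h_i · C(m + d − i, d)`, then the sequence `(a_m)` is log-concave:
`a_m > 0` for all `m`, and `a_m² ≥ a_{m−1}·a_{m+1}` for all `m ≥ 1`.  (If the
`h*`-polynomial of a polytope is log-concave then its Ehrhart series is log-concave.) -/
theorem hstar_log_concave_implies_ehrhart_series_log_concave
    (d : ℕ) (hd : 1 ≤ d) (h : ℕ → ℝ)
    (hpos : ∀ i ≤ d, 0 < h i)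
    (hlc : ∀ i : ℕ, 1 ≤ i → i ≤ d - 1 → h (i - 1) * h (i + 1) ≤ h i ^ 2)
    (a : ℕ → ℝ)
    (ha : ∀ m : ℕ, a m = ∑ i ∈ Finset.range (d + 1), h i * ((m + d - i).choose d : ℝ)) :
    (∀ m : ℕ, 0 < a m) ∧ ∀ m : ℕ, 1 ≤ m → a (m - 1) * a (m + 1) ≤ a m ^ 2 := by
  -- positivity
  have hapos : ∀ m : ℕ, 0 < a m := by
    intro m
    rw [ha]
    apply Finset.sum_pos'
    · intro i hi
      have hid : i ≤ d := Nat.lt_succ_iff.mp (Finset.mem_range.mp hi)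
      exact mul_nonneg (hpos i hid).le (Nat.cast_nonneg _)
    · refine ⟨0, Finset.mem_range.mpr (by omega), ?_⟩
      apply mul_pos (hpos 0 (by omega))
      have : 0 < (m + d - 0).choose d := Nat.choose_pos (by omega)
      exact_mod_cast this
  -- the truncated sequence
  set x : ℕ → ℝ := fun k => if k ≤ d then h k else 0 with hxdef
  have hx0 : ∀ k, 0 ≤ x k := by
    intro k
    simp only [hxdef]
    split
    · exact (hpos k (by assumption)).le
    · exact le_refl 0
  -- ratio-decreasing property of h on [0, d]
  have hratio : ∀ v u, u ≤ v → v + 1 ≤ d → h u * h (v + 1) ≤ h (u + 1) * h v := by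
    intro v
    induction v with
    | zero =>
      intro u hu _
      interval_cases u
      rw [mul_comm]
    | succ v ih =>
      intro u hu hvd
      rcases Nat.lt_or_ge u (v + 1) with h' | h'
      · have h1 := ih u (by omega) (by omega)
        have h2 := hlc (v + 1) (by omega) (by omega)
        rw [show v + 1 - 1 = v from by omega, show v + 1 + 1 = v + 2 from rfl] at h2
        have p1 := hpos v (by omega)
        have p2 := hpos (v + 1) (by omega)
        have p3 := hpos (v + 2) (by omega)
        have p4 := hpos u (by omega)
        have p5 := hpos (u + 1) (by omega)
        nlinarith [mul_le_mul h1 h2 (mul_pos p1 p3).le (mul_pos p5 p1).le]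
      · have : u = v + 1 := by omega
        subst this
        rw [mul_comm]
  have hxrd : ∀ u v, u ≤ v → x u * x (v + 1) ≤ x (u + 1) * x v := by
    intro u v huv
    by_cases hv1 : v + 1 ≤ d
    · have hu1 : u + 1 ≤ d := by omega
      simp only [hxdef, if_pos hv1, if_pos hu1, if_pos (by omega : u ≤ d),
        if_pos (by omega : v ≤ d)]
      exact hratio v u huv hv1
    · have hz : x (v + 1) = 0 := by simp only [hxdef, if_neg hv1]
      rw [hz, mul_zero]
      exact mul_nonneg (hx0 _) (hx0 _)
  -- a agrees with the iterated partial sums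
  have key : ∀ m, a m = itps x d m := by
    intro m
    rw [ha, itps_eq]
    rcases le_total d m with hdm | hmd
    · rw [← Finset.sum_subset (Finset.range_subset_range.mpr (by omega) :
        Finset.range (d + 1) ⊆ Finset.range (m + 1))]
      · apply Finset.sum_congr rfl
        intro k hk
        have hkd : k ≤ d := Nat.lt_succ_iff.mp (Finset.mem_range.mp hk)
        simp only [hxdef, if_pos hkd]
        rw [show m - k + d = m + d - k from by omega]
      · intro k _ hk
        have : ¬ (k ≤ d) := by
          simp only [Finset.mem_range] at hk
          omega
        simp only [hxdef, if_neg this, zero_mul]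
    · rw [← Finset.sum_subset (Finset.range_subset_range.mpr (by omega) :
        Finset.range (m + 1) ⊆ Finset.range (d + 1))]
      · apply Finset.sum_congr rfl
        intro k hk
        have hkm : k ≤ m := Nat.lt_succ_iff.mp (Finset.mem_range.mp hk)
        simp only [hxdef, if_pos (by omega : k ≤ d)]
        rw [show m - k + d = m + d - k from by omega]
      · intro i hi hi'
        simp only [Finset.mem_range] at hi hi'
        have : (m + d - i).choose d = 0 := Nat.choose_eq_zero_of_lt (by omega)
        rw [this]
        simp
  refine ⟨hapos, ?_⟩
  intro m hm
  rw [key, key, key]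
  have := itps_rd x hx0 hxrd d (m - 1) m (by omega)
  rw [show m - 1 + 1 = m from by omega] at this
  rw [sq]
  exact this
end

section
/- Let b ≥ 3, r ≥ 0 and k ≥ r + 2 be integers, and let Q(x) = (Σ_{i=0}^{k+r} x^i)·(Σ_{j=0}^{b−1} x^{j·k}) ∈ ℤ[x], a polynomial of degree d = b·k + r. Then the coefficient sequence c₀, c₁, …, c_d of Q is not unimodal; in particular the coefficient of x^k equals 2, the coefficient of x^{k+r+1} equals 1, and the coefficient of x^{2k} equals 2, with k < k+r+1 < 2k. -/
lemma payne_inner_sum (N m n : ℕ) :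
    (∑ i ∈ Finset.range N, if n = i + m then (1:ℤ) else 0)
      = if m ≤ n ∧ n - m < N then 1 else 0 := by
  have h : ∀ i, (if n = i + m then (1:ℤ) else 0) = if i = n - m ∧ m ≤ n then 1 else 0 := by
    intro i
    have : (n = i + m) ↔ (i = n - m ∧ m ≤ n) := by omega
    simp only [this]
  simp only [h]
  by_cases hm : m ≤ n
  · simp only [hm, and_true]
    rw [Finset.sum_ite_eq' (Finset.range N) (n - m) (fun _ => (1:ℤ))]
    simp [Finset.mem_range]
  · simp [hm]

lemma coeffQ (b r k n : ℕ) :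
    ((∑ i ∈ Finset.range (k + r + 1), (Polynomial.X : Polynomial ℤ) ^ i) *
        (∑ j ∈ Finset.range b, (Polynomial.X : Polynomial ℤ) ^ (j * k))).coeff n
      = ((Finset.range b).filter (fun j => j * k ≤ n ∧ n - j * k ≤ k + r)).card := by
  rw [Finset.sum_mul_sum]
  simp only [← pow_add]
  rw [Polynomial.finset_sum_coeff]
  simp only [Polynomial.finset_sum_coeff, Polynomial.coeff_X_pow]
  rw [Finset.sum_comm]
  have : ∀ j ∈ Finset.range b,
      (∑ i ∈ Finset.range (k + r + 1), if n = i + j * k then (1:ℤ) else 0)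
        = if j * k ≤ n ∧ n - j * k ≤ k + r then 1 else 0 := by
    intro j _
    rw [payne_inner_sum]
    congr 1
    simp only [eq_iff_iff]
    omega
  rw [Finset.sum_congr rfl this, Finset.sum_boole]

/-- For integers `b ≥ 3`, `r ≥ 0`, `k ≥ r + 2`, the polynomial
`Q(x) = (Σ_{i=0}^{k+r} x^i)·(Σ_{j=0}^{b−1} x^{jk}) ∈ ℤ[x]` of degree `d = bk + r` has a
non-unimodal coefficient sequence `c₀, …, c_d`; in particular the coefficients at
`x^k`, `x^{k+r+1}` and `x^{2k}` are `2`, `1` and `2` respectively, with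
`k < k+r+1 < 2k`. -/
theorem payne_simplex_hstar_not_unimodal (b r k : ℕ) (hb : 3 ≤ b) (hk : r + 2 ≤ k)
    (Q : Polynomial ℤ)
    (hQ : Q = (∑ i ∈ Finset.range (k + r + 1), (Polynomial.X : Polynomial ℤ) ^ i) *
        (∑ j ∈ Finset.range b, (Polynomial.X : Polynomial ℤ) ^ (j * k))) :
    Q.coeff k = 2 ∧ Q.coeff (k + r + 1) = 1 ∧ Q.coeff (2 * k) = 2 ∧
      k < k + r + 1 ∧ k + r + 1 < 2 * k ∧
      ¬ ∃ j ≤ b * k + r,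
          (∀ a c : ℕ, a ≤ c → c ≤ j → Q.coeff a ≤ Q.coeff c) ∧
            (∀ a c : ℕ, j ≤ a → a ≤ c → c ≤ b * k + r → Q.coeff c ≤ Q.coeff a) := by
  subst hQ
  have hmul : ∀ j : ℕ, 2 ≤ j → 2 * k ≤ j * k := fun j hj => Nat.mul_le_mul_right k hj
  have hmul3 : ∀ j : ℕ, 3 ≤ j → 3 * k ≤ j * k := fun j hj => Nat.mul_le_mul_right k hj
  have h1 : ((Finset.range b).filter (fun j => j * k ≤ k ∧ k - j * k ≤ k + r)) = {0, 1} := by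
    ext j
    simp only [Finset.mem_filter, Finset.mem_range, Finset.mem_insert, Finset.mem_singleton]
    constructor
    · rintro ⟨hj, hc1, hc2⟩
      by_contra h
      push_neg at h
      have : 2 ≤ j := by omega
      have := hmul j this
      omega
    · rintro (rfl | rfl) <;> simp <;> omega
  have h2 : ((Finset.range b).filter
      (fun j => j * k ≤ k + r + 1 ∧ k + r + 1 - j * k ≤ k + r)) = {1} := by
    ext j
    simp only [Finset.mem_filter, Finset.mem_range, Finset.mem_singleton]
    constructor
    · rintro ⟨hj, hc1, hc2⟩
      by_contra h
      rcases Nat.lt_or_ge j 2 with h' | h'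
      · interval_cases j <;> omega
      · have := hmul j h'
        omega
    · rintro rfl
      simp
      omega
  have h3 : ((Finset.range b).filter
      (fun j => j * k ≤ 2 * k ∧ 2 * k - j * k ≤ k + r)) = {1, 2} := by
    ext j
    simp only [Finset.mem_filter, Finset.mem_range, Finset.mem_insert, Finset.mem_singleton]
    constructor
    · rintro ⟨hj, hc1, hc2⟩
      by_contra h
      push_neg at h
      rcases Nat.lt_or_ge j 3 with h' | h'
      · interval_cases j <;> omega
      · have := hmul3 j h'
        omega
    · rintro (rfl | rfl) <;> simp <;> omega
  have c1 : ((∑ i ∈ Finset.range (k + r + 1), (Polynomial.X : Polynomial ℤ) ^ i) *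
        (∑ j ∈ Finset.range b, (Polynomial.X : Polynomial ℤ) ^ (j * k))).coeff k = 2 := by
    rw [coeffQ, h1]; rfl
  have c2 : ((∑ i ∈ Finset.range (k + r + 1), (Polynomial.X : Polynomial ℤ) ^ i) *
        (∑ j ∈ Finset.range b, (Polynomial.X : Polynomial ℤ) ^ (j * k))).coeff (k + r + 1) = 1 := by
    rw [coeffQ, h2]; rfl
  have c3 : ((∑ i ∈ Finset.range (k + r + 1), (Polynomial.X : Polynomial ℤ) ^ i) *
        (∑ j ∈ Finset.range b, (Polynomial.X : Polynomial ℤ) ^ (j * k))).coeff (2 * k) = 2 := by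
    rw [coeffQ, h3]; rfl
  refine ⟨c1, c2, c3, by omega, by omega, ?_⟩
  rintro ⟨j, hj, hup, hdown⟩
  have h2k : 2 * k ≤ b * k + r := by
    have := hmul b (by omega)
    omega
  rcases Nat.le_total j (k + r + 1) with hle | hle
  · have := hdown (k + r + 1) (2 * k) hle (by omega) h2k
    omega
  · have := hup k (k + r + 1) (by omega) hle
    omega
end

section
/- Let i ≥ 0 and B ≥ 3 be integers, set a = i + B/2 − 1 and b = B/2 (as rational numbers), and let f(x) = a·x² + b·x + 1. Then for every integer n ≥ 2 one has f(−n)² ≥ f(−n+1)·f(−n−1). (By Pick's theorem, every Ehrhart polynomial of a lattice polygon with i interior lattice points and B boundary lattice points has this form; hence for every lattice polygon P the sequence |E_P(−1)|, |E_P(−2)|, |E_P(−3)|, … is log-concave.) -/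
/-- Let `i ≥ 0` and `B ≥ 3` be integers, `a = i + B/2 − 1`, `b = B/2`
(as rationals) and `f(x) = a·x² + b·x + 1`.  Then for every integer `n ≥ 2`,
`f(−n)² ≥ f(−n+1)·f(−n−1)`.  (By Pick's theorem, for every lattice polygon `P` the
sequence `|E_P(−1)|, |E_P(−2)|, …` is log-concave.) -/
theorem lattice_polygon_negative_evaluations_log_concave
    (i B : ℤ) (hi : 0 ≤ i) (hB : 3 ≤ B)
    (a b : ℚ) (ha : a = (i : ℚ) + (B : ℚ) / 2 - 1) (hb : b = (B : ℚ) / 2)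
    (f : ℚ → ℚ) (hf : ∀ x : ℚ, f x = a * x ^ 2 + b * x + 1) :
    ∀ n : ℤ, 2 ≤ n →
      f (-(n : ℚ) + 1) * f (-(n : ℚ) - 1) ≤ f (-(n : ℚ)) ^ 2 := by
  intro n hn
  have hii : (0:ℤ) ≤ i * (i - 1) := by
    rcases hi.eq_or_lt with h | h
    · simp [← h]
    · have h1 : (1:ℤ) ≤ i := h
      nlinarith
  have hn' : (0:ℚ) ≤ (n:ℚ) - 2 := by
    have : (2:ℚ) ≤ (n:ℚ) := by exact_mod_cast hn
    linarith
  have hi' : (0:ℚ) ≤ (i:ℚ) := by exact_mod_cast hi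
  have hd' : (0:ℚ) ≤ (B:ℚ) - 3 := by
    have : (3:ℚ) ≤ (B:ℚ) := by exact_mod_cast hB
    linarith
  have hii' : (0:ℚ) ≤ (i:ℚ) * ((i:ℚ) - 1) := by exact_mod_cast hii
  rw [hf, hf, hf]
  subst ha hb
  nlinarith [hn', hi', hd', hii', mul_nonneg hn' hd', mul_nonneg hn' hi',
    mul_nonneg hd' hi', sq_nonneg ((n:ℚ) - 2), sq_nonneg ((B:ℚ) - 3),
    sq_nonneg (i:ℚ), mul_nonneg (mul_nonneg hn' hn') hd',
    mul_nonneg (mul_nonneg hn' hd') hi', mul_nonneg (mul_nonneg hn' hi') hi',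
    mul_nonneg (mul_nonneg hn' hn') hi',
    mul_nonneg (mul_nonneg (mul_nonneg hn' hn') hd') hd',
    mul_nonneg (mul_nonneg (mul_nonneg hn' hn') hd') hi',
    mul_nonneg (mul_nonneg (mul_nonneg hn' hn') hi') hi',
    mul_nonneg (mul_nonneg hn' hd') hd']
end

section
/- Fix a natural number q and let R_q ⊆ ℝ³ be the Reeve tetrahedron, i.e. the convex hull of the four integer points (0,0,0), (1,0,0), (0,1,0) and (1,q,q+1). Then for every natural number m, 6·#(m·R_q ∩ ℤ³) = (q+1)·m³ + 6·m² + (11 − q)·m + 6 (an identity of integers). Equivalently, the Ehrhart polynomial of R_q is E(x) = ((q+1)/6)x³ + x² + ((11−q)/6)x + 1; in particular, for q ≥ 12 this polynomial has a negative coefficient. -/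
/-!
The dilate `t • R_q` is cut out by its four facet inequalities. With `e₁, e₂` the unit vectors
and `v = (1, q, q + 1)`, the parallelepiped spanned by `e₁, e₂, v` has volume `q + 1`, and the
lattice points of its half-open version are `ρ₀ = 0` and `ρ_r = (1, r, r)` for `1 ≤ r ≤ q`.
Every lattice point is uniquely `μ₀ e₁ + μ₁ e₂ + μ₂ v + ρ_r` with `μ ∈ ℤ³`, and it lies in
`m • R_q` iff `μ ≥ 0` and `μ₀ + μ₁ + μ₂ + h_r ≤ m`, where `ρ_r` sits at height `h₀ = 0`,
`h_r = 2` otherwise. Counting lattice points of the standard simplex gives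
`#(m • R_q ∩ ℤ³) = C(m + 3, 3) + q · C(m + 1, 3)`, i.e. the `h*`-polynomial is `1 + q z²`.
-/

open Finset
open scoped Pointwise

section LatticeSimplex

def latticeSimplex (k n : ℕ) : Finset (Fin k → ℕ) :=
  (Fintype.piFinset fun _ => range (n + 1)).filter fun x => ∑ i, x i ≤ n

@[simp]
lemma mem_latticeSimplex {k n : ℕ} {x : Fin k → ℕ} : x ∈ latticeSimplex k n ↔ ∑ i, x i ≤ n := by
  simp only [latticeSimplex, mem_filter, Fintype.mem_piFinset, mem_range, and_iff_right_iff_imp]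
  exact fun h i => Nat.lt_succ_of_le ((single_le_sum (fun j _ => Nat.zero_le (x j))
    (mem_univ i)).trans h)

lemma latticeSimplex_zero (k : ℕ) : latticeSimplex k 0 = {0} := by
  ext x
  simp [funext_iff]

lemma latticeSimplex_succ (k n : ℕ) :
    latticeSimplex (k + 1) (n + 1) = latticeSimplex (k + 1) n ∪
      (latticeSimplex k (n + 1)).image fun x => Fin.cons (n + 1 - ∑ i, x i) x := by
  ext y
  simp only [mem_union, mem_image, mem_latticeSimplex]
  constructor
  · intro hy
    refine (Nat.lt_or_ge (∑ i, y i) (n + 1)).imp (by omega) fun h => ⟨Fin.tail y, ?_, ?_⟩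
    all_goals rw [Fin.sum_univ_succ] at hy h; simp only [Fin.tail]
    · omega
    · conv_rhs => rw [← Fin.cons_self_tail y]
      congr 1
      omega
  · rintro (h | ⟨x, hx, rfl⟩)
    · omega
    · rw [Fin.sum_cons]; omega

lemma disjoint_latticeSimplex_succ (k n : ℕ) :
    Disjoint (latticeSimplex (k + 1) n)
      ((latticeSimplex k (n + 1)).image fun x => Fin.cons (n + 1 - ∑ i, x i) x) := by
  simp only [disjoint_left, mem_image, mem_latticeSimplex, not_exists, not_and]
  rintro _ hy x hx rfl
  rw [Fin.sum_cons] at hy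
  omega

lemma card_latticeSimplex (k n : ℕ) : #(latticeSimplex k n) = (n + k).choose k := by
  induction k generalizing n with
  | zero => simp [latticeSimplex]
  | succ k ihk =>
    induction n with
    | zero => simp [latticeSimplex_zero]
    | succ n ihn =>
      rw [latticeSimplex_succ, card_union_of_disjoint (disjoint_latticeSimplex_succ k n),
        card_image_of_injective _ fun x x' h => by simpa using congrArg Fin.tail h, ihn, ihk,
        show n + 1 + (k + 1) = n + k + 1 + 1 by ring, Nat.choose_succ_succ']
      ring_nf

lemma card_filter_latticeSimplex {k : ℕ} (hk : k ≠ 0) (n s : ℕ) :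
    #((latticeSimplex k n).filter fun x => ∑ i, x i + s ≤ n) = (n + k - s).choose k := by
  rcases le_or_gt s n with hs | hs
  · obtain ⟨n, rfl⟩ := Nat.exists_eq_add_of_le' hs
    rw [show n + s + k - s = n + k by omega, ← card_latticeSimplex]
    congr 1
    ext x
    simp only [mem_filter, mem_latticeSimplex]
    omega
  · rw [Nat.choose_eq_zero_of_lt (by omega), card_eq_zero, filter_eq_empty_iff]
    intro x _ h
    omega

end LatticeSimplex

lemma six_mul_choose_three (n : ℕ) : 6 * (n.choose 3 : ℤ) = n * (n - 1) * (n - 2) := by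
  rcases lt_or_ge n 2 with hn | hn
  · interval_cases n <;> rfl
  · have h := Nat.descFactorial_eq_factorial_mul_choose n 3
    simp only [Nat.descFactorial_succ, Nat.descFactorial_zero, Nat.factorial, Nat.sub_zero] at h
    zify [hn, (by omega : 1 ≤ n)] at h
    linarith

section Geometry

variable {𝕜 : Type*} [Field 𝕜] [LinearOrder 𝕜] [IsStrictOrderedRing 𝕜]

lemma add_smul_mem_smul_convexHull_zero_insert {E : Type*} [AddCommGroup E] [Module 𝕜 E]
    {t μ₁ μ₂ μ₃ : 𝕜} (a b c : E) (h₁ : 0 ≤ μ₁) (h₂ : 0 ≤ μ₂) (h₃ : 0 ≤ μ₃)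
    (hsum : μ₁ + μ₂ + μ₃ ≤ t) :
    μ₁ • a + μ₂ • b + μ₃ • c ∈ t • convexHull 𝕜 {0, a, b, c} := by
  rcases (show 0 ≤ t by linarith).eq_or_lt with rfl | ht
  · obtain ⟨rfl, rfl, rfl⟩ : μ₁ = 0 ∧ μ₂ = 0 ∧ μ₃ = 0 := by refine ⟨?_, ?_, ?_⟩ <;> linarith
    rw [Set.zero_smul_set ((Set.insert_nonempty _ _).convexHull)]
    simp
  rw [Set.mem_smul_set_iff_inv_smul_mem₀ ht.ne']
  refine mem_convexHull_of_exists_fintype (ι := Fin 4) ![1 - t⁻¹ * (μ₁ + μ₂ + μ₃), t⁻¹ * μ₁,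
    t⁻¹ * μ₂, t⁻¹ * μ₃] ![0, a, b, c] ?_ ?_ ?_ ?_
  · have : t⁻¹ * (μ₁ + μ₂ + μ₃) ≤ 1 := by rwa [inv_mul_le_iff₀ ht, mul_one]
    intro i
    fin_cases i <;> simp only [Fin.zero_eta, Fin.mk_one, Fin.reduceFinMk, Matrix.cons_val]
      <;> first | linarith | positivity
  · simp only [Fin.sum_univ_four, Matrix.cons_val]; ring
  · intro i; fin_cases i <;> simp
  · simp [Fin.sum_univ_four, smul_add, mul_smul]

def reeveHalfSpaces {R : Type*} [Ring R] [LE R] (c t : R) : Set (Fin 3 → R) :=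
  {x | 0 ≤ x 2 ∧ x 2 ≤ (c + 1) * x 0 ∧ c * x 2 ≤ (c + 1) * x 1 ∧
    (c + 1) * (x 0 + x 1) ≤ (c + 1) * t + c * x 2}

lemma convex_reeveHalfSpaces (c t : 𝕜) : Convex 𝕜 (reeveHalfSpaces c t) := by
  intro x ⟨hx₁, hx₂, hx₃, hx₄⟩ y ⟨hy₁, hy₂, hy₃, hy₄⟩ a b ha hb hab
  simp only [reeveHalfSpaces, Set.mem_ofPred_eq, Pi.add_apply, Pi.smul_apply, smul_eq_mul]
  refine ⟨by positivity, ?_, ?_, ?_⟩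
  · nlinarith [mul_le_mul_of_nonneg_left hx₂ ha, mul_le_mul_of_nonneg_left hy₂ hb]
  · nlinarith [mul_le_mul_of_nonneg_left hx₃ ha, mul_le_mul_of_nonneg_left hy₃ hb]
  · nlinarith [mul_le_mul_of_nonneg_left hx₄ ha, mul_le_mul_of_nonneg_left hy₄ hb]

lemma smul_convexHull_reeve {c t : 𝕜} (hc : 0 < c + 1) (ht : 0 ≤ t) :
    t • convexHull 𝕜 {![0, 0, 0], ![1, 0, 0], ![0, 1, 0], ![1, c, c + 1]} =
      reeveHalfSpaces c t := by
  apply Set.Subset.antisymm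
  · rw [← convexHull_smul]
    refine convexHull_min ?_ (convex_reeveHalfSpaces c t)
    simp only [Set.smul_set_insert, Set.smul_set_singleton, Set.insert_subset_iff,
      Set.singleton_subset_iff, reeveHalfSpaces, Set.mem_ofPred_eq, Matrix.smul_cons,
      Matrix.smul_empty, smul_eq_mul, Matrix.cons_val, mul_zero, mul_one]
    refine ⟨?_, ?_, ?_, ?_⟩ <;> refine ⟨?_, ?_, ?_, ?_⟩ <;> nlinarith [mul_nonneg hc.le ht]
  · rintro x ⟨hx₁, hx₂, hx₃, hx₄⟩
    set μ := x 2 / (c + 1)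
    have hμ : x 2 = (c + 1) * μ := (mul_div_cancel₀ _ hc.ne').symm
    rw [hμ, mul_left_comm] at hx₃
    rw [hμ] at hx₁ hx₂ hx₄
    have h₀ : (![0, 0, 0] : Fin 3 → 𝕜) = 0 := by ext i; fin_cases i <;> rfl
    have hx : x = (x 0 - μ) • ![1, 0, 0] + (x 1 - c * μ) • ![0, 1, 0] + μ • ![1, c, c + 1] := by
      ext i; fin_cases i <;> simp only [Pi.add_apply, Pi.smul_apply, smul_eq_mul, Matrix.cons_val,
        Fin.zero_eta, Fin.mk_one, Fin.reduceFinMk, hμ] <;> ring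
    rw [hx, h₀]
    refine add_smul_mem_smul_convexHull_zero_insert _ _ _ ?_ ?_ ?_ ?_
    · linarith [le_of_mul_le_mul_left hx₂ hc]
    · linarith [le_of_mul_le_mul_left hx₃ hc]
    · exact nonneg_of_mul_nonneg_right hx₁ hc
    · have : (c + 1) * (x 0 + x 1) ≤ (c + 1) * (t + c * μ) := by linarith
      linarith [le_of_mul_le_mul_left this hc]

end Geometry

lemma le_mul_iff_min_one_le {d r n : ℤ} (hr : 0 ≤ r) (hrd : r < d) :
    r ≤ d * n ↔ min r 1 ≤ n := by
  rcases lt_trichotomy n 0 with hn | rfl | hn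
  · have : d * n ≤ -d := by nlinarith
    omega
  · omega
  · have : d ≤ d * n := le_mul_of_one_le_right (by omega) hn
    omega

lemma neg_le_mul_iff_nonneg {d r n : ℤ} (hr : 0 ≤ r) (hrd : r < d) :
    -r ≤ d * n ↔ 0 ≤ n := by
  rcases lt_or_ge n 0 with hn | hn
  · have : d * n ≤ -d := by nlinarith
    omega
  · have : 0 ≤ d * n := by nlinarith
    omega

/-- `μ₀ e₁ + μ₁ e₂ + μ₂ v + ρ_r` for `x = (r, μ)`, with `ρ_r = (min r 1, r, r)`. -/
def reeveLatticePoint (q : ℕ) (x : Fin (q + 1) × (Fin 3 → ℤ)) : Fin 3 → ℤ :=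
  ![x.2 0 + x.2 2 + min (x.1 : ℤ) 1, x.2 1 + q * x.2 2 + x.1, (q + 1) * x.2 2 + x.1]

lemma reeveLatticePoint_bijective (q : ℕ) : Function.Bijective (reeveLatticePoint q) := by
  have hq : (0 : ℤ) < q + 1 := by positivity
  constructor
  · rintro ⟨r, μ⟩ ⟨r', μ'⟩ h
    have h₀ := congrFun h 0
    have h₁ := congrFun h 1
    have h₂ := congrFun h 2
    simp only [reeveLatticePoint, Matrix.cons_val] at h₀ h₁ h₂
    have hmod (n : ℤ) (s : Fin (q + 1)) : ((q + 1) * n + s) % (q + 1) = s := by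
      rw [add_comm, Int.add_mul_emod_self_left, Int.emod_eq_of_lt (by positivity) (by omega)]
    have hr : (r : ℤ) = r' := by rw [← hmod (μ 2) r, ← hmod (μ' 2) r', h₂]
    have hμ₂ : μ 2 = μ' 2 := mul_left_cancel₀ hq.ne' (by linarith)
    rw [hμ₂, hr] at h₀ h₁
    obtain rfl : r = r' := Fin.ext (by exact_mod_cast hr)
    refine Prod.ext rfl (funext fun i => ?_)
    fin_cases i <;> simp only [Fin.zero_eta, Fin.mk_one, Fin.reduceFinMk] <;> linarith
  · intro p
    set j := p 2 / (q + 1)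
    set r := p 2 % (q + 1)
    have hr : 0 ≤ r := Int.emod_nonneg _ hq.ne'
    have hrq : r < q + 1 := Int.emod_lt_of_pos _ hq
    refine ⟨(⟨r.toNat, by omega⟩, ![p 0 - j - min r 1, p 1 - q * j - r, j]), ?_⟩
    have hp := Int.mul_ediv_add_emod (p 2) (q + 1)
    ext i
    fin_cases i <;> simp only [reeveLatticePoint, Matrix.cons_val, Fin.zero_eta, Fin.mk_one,
      Fin.reduceFinMk, Int.toNat_of_nonneg hr] <;> linarith

lemma reeveLatticePoint_mem_iff {q : ℕ} {t : ℤ} {r : Fin (q + 1)} {μ : Fin 3 → ℤ} :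
    reeveLatticePoint q (r, μ) ∈ reeveHalfSpaces (q : ℤ) t ↔
      (∀ i, 0 ≤ μ i) ∧ ∑ i, μ i + 2 * min (r : ℤ) 1 ≤ t := by
  have hr : (0 : ℤ) ≤ r := by positivity
  have hrq : (r : ℤ) < q + 1 := by exact_mod_cast r.isLt
  have h₀ := le_mul_iff_min_one_le (n := μ 0 + min (r : ℤ) 1) hr hrq
  have h₁ := neg_le_mul_iff_nonneg (n := μ 1) hr hrq
  have h₂ := neg_le_mul_iff_nonneg (n := μ 2) hr hrq
  have h₃ := le_mul_iff_min_one_le (n := t - (μ 0 + μ 1 + μ 2) - min (r : ℤ) 1) hr hrq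
  simp only [reeveHalfSpaces, reeveLatticePoint, Set.mem_ofPred_eq, Fin.sum_univ_three,
    Matrix.cons_val]
  constructor
  · rintro ⟨c₂, c₀, c₁, c₃⟩
    refine ⟨fun i => ?_, ?_⟩
    · fin_cases i <;> simp only [Fin.zero_eta, Fin.mk_one, Fin.reduceFinMk]
      · linarith [h₀.mp (by linarith)]
      · exact h₁.mp (by linarith)
      · exact h₂.mp (by linarith)
    · linarith [h₃.mp (by linarith)]
  · rintro ⟨hμ, hsum⟩
    refine ⟨?_, ?_, ?_, ?_⟩
    · linarith [h₂.mpr (hμ 2)]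
    · linarith [h₀.mpr (by linarith [hμ 0])]
    · linarith [h₁.mpr (hμ 1)]
    · linarith [h₃.mpr (by linarith)]

def reeveIndex (q m : ℕ) : Finset (Σ _ : Fin (q + 1), Fin 3 → ℕ) :=
  univ.sigma fun r => (latticeSimplex 3 m).filter fun ν => ∑ i, ν i + 2 * min (r : ℕ) 1 ≤ m

lemma card_reeveIndex (q m : ℕ) :
    #(reeveIndex q m) = (m + 3).choose 3 + q * (m + 1).choose 3 := by
  rw [reeveIndex, card_sigma]
  simp only [card_filter_latticeSimplex three_ne_zero]
  rw [Fin.sum_univ_succ]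
  simp

lemma ncard_reeveHalfSpaces (q m : ℕ) :
    (reeveHalfSpaces (q : ℤ) m).ncard = #(reeveIndex q m) := by
  have hΦ : Function.Injective fun x : Σ _ : Fin (q + 1), Fin 3 → ℕ =>
      reeveLatticePoint q (x.1, fun i => (x.2 i : ℤ)) := by
    rintro ⟨r, ν⟩ ⟨r', ν'⟩ h
    obtain ⟨rfl, h⟩ := Prod.ext_iff.mp ((reeveLatticePoint_bijective q).1 h)
    simp only [funext_iff, Nat.cast_inj] at h
    simp [funext h]
  suffices reeveHalfSpaces (q : ℤ) m = (fun x : Σ _ : Fin (q + 1), Fin 3 → ℕ =>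
      reeveLatticePoint q (x.1, fun i => (x.2 i : ℤ))) '' reeveIndex q m by
    rw [this, Set.ncard_image_of_injective _ hΦ, Set.ncard_coe_finset]
  ext p
  obtain ⟨⟨r, μ⟩, rfl⟩ := (reeveLatticePoint_bijective q).2 p
  rw [reeveLatticePoint_mem_iff, Set.mem_image]
  constructor
  · rintro ⟨hμ, hsum⟩
    have hμ' : (fun i => ((μ i).toNat : ℤ)) = μ := funext fun i => Int.toNat_of_nonneg (hμ i)
    refine ⟨⟨r, fun i => (μ i).toNat⟩, ?_, by rw [hμ']⟩
    rw [← hμ'] at hsum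
    dsimp only at hsum
    have : ∑ i, (μ i).toNat + 2 * min (r : ℕ) 1 ≤ m := by exact_mod_cast hsum
    simp only [reeveIndex, mem_coe, mem_sigma, mem_univ, mem_filter, mem_latticeSimplex, true_and]
    omega
  · rintro ⟨⟨r', ν⟩, hν, h⟩
    obtain ⟨rfl, rfl⟩ := Prod.ext_iff.mp ((reeveLatticePoint_bijective q).1 h)
    simp only [reeveIndex, mem_coe, mem_sigma, mem_univ, mem_filter, mem_latticeSimplex,
      true_and] at hν
    dsimp only
    exact ⟨fun i => by positivity, by exact_mod_cast hν.2⟩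

/-- Let `R_q ⊆ ℝ³` be the Reeve tetrahedron, the convex hull of
`(0,0,0)`, `(1,0,0)`, `(0,1,0)` and `(1,q,q+1)`.  Then for every natural number `m`,
`6·#(m·R_q ∩ ℤ³) = (q+1)m³ + 6m² + (11 − q)m + 6` as integers; i.e. the Ehrhart
polynomial of `R_q` is `((q+1)/6)x³ + x² + ((11−q)/6)x + 1`. -/
theorem reeve_tetrahedron_ehrhart (q : ℕ) (P : Set (Fin 3 → ℝ))
    (hP : P = convexHull ℝ
      {![0, 0, 0], ![1, 0, 0], ![0, 1, 0], ![1, (q : ℝ), (q : ℝ) + 1]}) :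
    ∀ m : ℕ,
      6 * ({p : Fin 3 → ℤ | (fun i => (p i : ℝ)) ∈ (m : ℝ) • P}.ncard : ℤ) =
        ((q : ℤ) + 1) * (m : ℤ) ^ 3 + 6 * (m : ℤ) ^ 2 + (11 - (q : ℤ)) * (m : ℤ) + 6 := by
  intro m
  have hlattice : {p : Fin 3 → ℤ | (fun i => (p i : ℝ)) ∈ (m : ℝ) • P} =
      reeveHalfSpaces (q : ℤ) m := by
    rw [hP, smul_convexHull_reeve (by positivity) (by positivity)]
    ext p
    simp only [reeveHalfSpaces, Set.mem_ofPred_eq]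
    norm_cast
  rw [hlattice, ncard_reeveHalfSpaces, card_reeveIndex]
  push_cast
  rw [mul_add, six_mul_choose_three, mul_left_comm, six_mul_choose_three]
  push_cast
  ring
end

section
/- Let d ≥ 1 and let ã₀, ã₁, …, ã_d be positive real numbers forming a log-concave sequence (ã_j² ≥ ã_{j−1}ã_{j+1} for 1 ≤ j ≤ d−1). Define the polynomial f(x) = Σ_{j=0}^{d} (−1)^{d−j} ã_j · binom(x + j, j) ∈ ℝ[x]. Then for every integer m ≥ 1 one has (−1)^d f(−m) = Σ_{j=0}^{d} ã_j·C(m−1, j) ≥ ã₀ > 0, and for every integer m ≥ 2, f(−m)² ≥ f(−m+1)·f(−m−1); that is, the sequence |f(−1)|, |f(−2)|, |f(−3)|, … is log-concave. -/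
/-- The polynomial `binom(x + c, j) = (1/j!) · (x + c)(x + c − 1) ⋯ (x + c − j + 1) ∈ ℝ[x]`.
For `c = j` this is the polynomial `binom(x + j, j)`. -/
noncomputable def binomPoly (j : ℕ) (c : ℝ) : Polynomial ℝ :=
  Polynomial.C ((j.factorial : ℝ)⁻¹) *
    ∏ t ∈ Finset.range j, (Polynomial.X + Polynomial.C (c - t))

section Helpers

lemma choose_cast_identity (n j : ℕ) :
    ((n:ℝ) - j) * (n.choose j : ℝ) = (j+1) * (n.choose (j+1) : ℝ) := by
  rcases lt_trichotomy n j with h | h | h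
  · have h1 : n.choose j = 0 := Nat.choose_eq_zero_of_lt h
    have h2 : n.choose (j+1) = 0 := Nat.choose_eq_zero_of_lt (Nat.lt_succ_of_lt h)
    rw [h1, h2]; simp
  · subst h
    have h2 : n.choose (n+1) = 0 := Nat.choose_eq_zero_of_lt (Nat.lt_succ_self n)
    rw [h2]; simp
  · have hid := Nat.choose_succ_right_eq n j
    have hc : ((n.choose (j+1) * (j+1) : ℕ) : ℝ) = ((n.choose j * (n - j) : ℕ) : ℝ) := by
      exact_mod_cast congrArg (Nat.cast (R := ℝ)) hid
    push_cast [Nat.cast_sub h.le] at hc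
    linarith

lemma prod_shift_eval (j m : ℕ) (hm : 1 ≤ m) :
    (∏ t ∈ Finset.range j, ((t : ℝ) + 1 - m)) =
      (-1:ℝ)^j * ((m-1).choose j : ℝ) * j.factorial := by
  induction j with
  | zero => simp
  | succ j ih =>
    rw [Finset.prod_range_succ, ih]
    have hcast : ((m - 1 : ℕ) : ℝ) = (m:ℝ) - 1 := by
      push_cast [Nat.cast_sub hm]; ring
    have key := choose_cast_identity (m-1) j
    rw [hcast] at key
    have hfac : ((j+1).factorial : ℝ) = (j+1) * j.factorial := by
      push_cast [Nat.factorial_succ]; ring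
    rw [hfac, pow_succ]
    linear_combination (-((-1:ℝ)^j * (j.factorial:ℝ))) * key

lemma binomPoly_eval (j m : ℕ) (hm : 1 ≤ m) :
    (binomPoly j (j:ℝ)).eval (-(m:ℝ)) = (-1:ℝ)^j * ((m-1).choose j : ℝ) := by
  unfold binomPoly
  rw [Polynomial.eval_mul, Polynomial.eval_C, Polynomial.eval_prod]
  have h1 : ∀ t ∈ Finset.range j,
      (Polynomial.X + Polynomial.C ((j:ℝ) - t)).eval (-(m:ℝ)) =
        ((j - 1 - t : ℕ) : ℝ) + 1 - m := by
    intro t ht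
    rw [Finset.mem_range] at ht
    simp only [Polynomial.eval_add, Polynomial.eval_X, Polynomial.eval_C]
    have h1t : (1:ℕ) + t ≤ j := by omega
    have hnat : j - 1 - t = j - (1 + t) := by omega
    rw [hnat, Nat.cast_sub h1t]
    push_cast
    ring
  rw [Finset.prod_congr rfl h1]
  have h2 := Finset.prod_range_reflect (fun t : ℕ => (t:ℝ) + 1 - m) j
  rw [h2, prod_shift_eval j m hm]
  have hne : (j.factorial : ℝ) ≠ 0 := by exact_mod_cast j.factorial_ne_zero
  field_simp

def Tt (a : ℕ → ℝ) : ℕ → ℝ := fun j => a j + a (j+1)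

def Qq (a : ℕ → ℝ) : Prop :=
  (∀ j, 0 ≤ a j) ∧ (∀ j, a j * a (j+2) ≤ a (j+1)^2) ∧ (∀ j, a j = 0 → a (j+1) = 0)

lemma gap3 {a : ℕ → ℝ} (h : Qq a) (j : ℕ) : a j * a (j+3) ≤ a (j+1) * a (j+2) := by
  obtain ⟨h0, hlc, hz⟩ := h
  rcases eq_or_lt_of_le (h0 (j+1)) with h1 | h1
  · have z2 := hz (j+1) h1.symm
    have z3 := hz (j+2) z2
    rw [z3, z2, ← h1]
    simp
  rcases eq_or_lt_of_le (h0 (j+2)) with h2 | h2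
  · have z3 := hz (j+2) h2.symm
    rw [z3, ← h2]
    simp
  · have k1 := hlc j
    have k2 := hlc (j+1)
    have hprod : (a j * a (j+2)) * (a (j+1) * a (j+3)) ≤ a (j+1)^2 * a (j+2)^2 :=
      mul_le_mul k1 k2 (mul_nonneg (h0 (j+1)) (h0 (j+3))) (sq_nonneg _)
    nlinarith [mul_pos h1 h2, h0 j, h0 (j+3)]

lemma gap4 {a : ℕ → ℝ} (h : Qq a) (j : ℕ) : a j * a (j+4) ≤ a (j+2)^2 := by
  obtain ⟨h0, hlc, hz⟩ := h
  rcases eq_or_lt_of_le (h0 (j+1)) with h1 | h1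
  · have z2 := hz (j+1) h1.symm
    have z3 := hz (j+2) z2
    have z4 := hz (j+3) z3
    rw [show j+4 = (j+3)+1 from rfl, z4]
    simp [sq_nonneg]
  rcases eq_or_lt_of_le (h0 (j+3)) with h3 | h3
  · have z4 := hz (j+3) h3.symm
    rw [show j+4 = (j+3)+1 from rfl, z4]
    simp [sq_nonneg]
  · have g1 := gap3 ⟨h0, hlc, hz⟩ j
    have g2 := gap3 ⟨h0, hlc, hz⟩ (j+1)
    have hprod : (a j * a (j+3)) * (a (j+1) * a (j+4)) ≤ (a (j+1) * a (j+2)) * (a (j+2) * a (j+3)) :=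
      mul_le_mul g1 g2 (mul_nonneg (h0 (j+1)) (h0 (j+4))) (mul_nonneg (h0 (j+1)) (h0 (j+2)))
    nlinarith [mul_pos h1 h3, h0 j, h0 (j+4), h0 (j+2)]

lemma Qq_T {a : ℕ → ℝ} (h : Qq a) : Qq (Tt a) := by
  obtain ⟨h0, hlc, hz⟩ := h
  refine ⟨fun j => by simpa [Tt] using add_nonneg (h0 j) (h0 (j+1)), fun j => ?_, fun j hj => ?_⟩
  · simp only [Tt]
    have g3 := gap3 ⟨h0, hlc, hz⟩ j
    have k1 := hlc j
    have k2 := hlc (j+1)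
    nlinarith [k1, k2, g3]
  · simp only [Tt] at hj ⊢
    have hj1 : a j = 0 := by nlinarith [h0 j, h0 (j+1)]
    have hj2 : a (j+1) = 0 := by nlinarith [h0 j, h0 (j+1)]
    have hj3 := hz (j+1) hj2
    rw [hj2, show j+1+1 = j+2 from rfl, hj3]
    ring

noncomputable def Bb (a : ℕ → ℝ) (n : ℕ) : ℝ := ∑ j ∈ Finset.range (n+1), a j * (n.choose j : ℝ)

lemma Bb_succ (a : ℕ → ℝ) (n : ℕ) : Bb a (n+1) = Bb (Tt a) n := by
  unfold Bb Tt
  rw [Finset.sum_range_succ' (fun j => a j * ((n+1).choose j : ℝ)) (n+1)]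
  have h1 : ∀ i ∈ Finset.range (n+1), a (i+1) * (((n+1).choose (i+1) : ℕ) : ℝ)
      = a (i+1) * (n.choose i : ℝ) + a (i+1) * (n.choose (i+1) : ℝ) := by
    intro i _
    rw [Nat.choose_succ_succ]
    push_cast
    ring
  rw [Finset.sum_congr rfl h1, Finset.sum_add_distrib]
  have h3 : ∑ i ∈ Finset.range (n+1), a (i+1) * (n.choose (i+1) : ℝ) + a 0 * (((n+1).choose 0 : ℕ) : ℝ)
      = ∑ j ∈ Finset.range (n+1), a j * (n.choose j : ℝ) := by
    rw [Finset.sum_range_succ]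
    rw [Nat.choose_succ_self]
    rw [Finset.sum_range_succ' (fun j => a j * (n.choose j : ℝ)) n]
    simp
  have h4 : ∑ j ∈ Finset.range (n+1), (a j + a (j+1)) * (n.choose j : ℝ)
      = ∑ j ∈ Finset.range (n+1), a j * (n.choose j : ℝ)
        + ∑ j ∈ Finset.range (n+1), a (j+1) * (n.choose j : ℝ) := by
    rw [← Finset.sum_add_distrib]
    exact Finset.sum_congr rfl (fun j _ => by ring)
  rw [h4, ← h3]
  ring

lemma Bb_logconcave : ∀ (n : ℕ) (a : ℕ → ℝ), Qq a → Bb a n * Bb a (n+2) ≤ Bb a (n+1)^2 := by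
  intro n
  induction n with
  | zero =>
    intro a h
    obtain ⟨h0, hlc, _⟩ := h
    simp only [Bb, Finset.sum_range_succ, Finset.sum_range_zero]
    norm_num
    nlinarith [hlc 0, h0 0, h0 1, h0 2]
  | succ n ih =>
    intro a h
    have e1 : Bb a (n+1) = Bb (Tt a) n := Bb_succ a n
    have e2 : Bb a (n+1+2) = Bb (Tt a) (n+2) := by
      rw [show n+1+2 = (n+2)+1 from rfl, Bb_succ]
    have e3 : Bb a (n+1+1) = Bb (Tt a) (n+1) := by
      rw [show n+1+1 = (n+1)+1 from rfl, Bb_succ]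
    rw [e1, e2, e3]
    exact ih (Tt a) (Qq_T h)

end Helpers

/-- Let `ã₀, …, ã_d` (`d ≥ 1`) be a positive log-concave sequence and
`f(x) = Σ_{j=0}^{d} (−1)^{d−j} ã_j·binom(x+j, j)`.  Then for every integer `m ≥ 1`,
`(−1)^d f(−m) = Σ_j ã_j·C(m−1, j) ≥ ã₀ > 0`, and for every integer `m ≥ 2`,
`f(−m)² ≥ f(−m+1)·f(−m−1)`; i.e. the sequence `|f(−1)|, |f(−2)|, …` is log-concave.
(Log-concavity of the absolute values of the `K`-polynomial coefficients implies
log-concavity of `|E_P(−1)|, |E_P(−2)|, …`.) -/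
theorem K_polynomial_log_concave_implies_negative_evaluations_log_concave
    (d : ℕ) (hd : 1 ≤ d) (a : ℕ → ℝ)
    (hpos : ∀ j ≤ d, 0 < a j)
    (hlc : ∀ j : ℕ, 1 ≤ j → j ≤ d - 1 → a (j - 1) * a (j + 1) ≤ a j ^ 2)
    (f : Polynomial ℝ)
    (hf : f = ∑ j ∈ Finset.range (d + 1),
      Polynomial.C ((-1 : ℝ) ^ (d - j) * a j) * binomPoly j (j : ℝ)) :
    (∀ m : ℕ, 1 ≤ m →
        (-1 : ℝ) ^ d * f.eval (-(m : ℝ)) =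
            ∑ j ∈ Finset.range (d + 1), a j * ((m - 1).choose j : ℝ) ∧
          a 0 ≤ (-1 : ℝ) ^ d * f.eval (-(m : ℝ))) ∧
      0 < a 0 ∧
      ∀ m : ℕ, 2 ≤ m →
        f.eval (-(m : ℝ) + 1) * f.eval (-(m : ℝ) - 1) ≤ f.eval (-(m : ℝ)) ^ 2 := by
  have hsq : (-1:ℝ)^d * (-1:ℝ)^d = 1 := by
    rw [← pow_add]
    exact Even.neg_one_pow ⟨d, rfl⟩
  -- the evaluation identity
  have feval : ∀ m : ℕ, 1 ≤ m →
      f.eval (-(m:ℝ)) = (-1:ℝ)^d * ∑ j ∈ Finset.range (d+1), a j * ((m-1).choose j : ℝ) := by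
    intro m hm
    rw [hf, Polynomial.eval_finset_sum, Finset.mul_sum]
    refine Finset.sum_congr rfl (fun j hj => ?_)
    rw [Finset.mem_range] at hj
    have hjd : j ≤ d := by omega
    rw [Polynomial.eval_mul, Polynomial.eval_C, binomPoly_eval j m hm]
    have hsign : (-1:ℝ)^(d-j) * (-1:ℝ)^j = (-1:ℝ)^d := by
      rw [← pow_add, Nat.sub_add_cancel hjd]
    calc (-1:ℝ)^(d-j) * a j * ((-1:ℝ)^j * ((m-1).choose j : ℝ))
        = ((-1:ℝ)^(d-j) * (-1:ℝ)^j) * (a j * ((m-1).choose j : ℝ)) := by ring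
      _ = (-1:ℝ)^d * (a j * ((m-1).choose j : ℝ)) := by rw [hsign]
  have part1 : ∀ m : ℕ, 1 ≤ m →
      (-1:ℝ)^d * f.eval (-(m:ℝ)) = ∑ j ∈ Finset.range (d+1), a j * ((m-1).choose j : ℝ) := by
    intro m hm
    rw [feval m hm, ← mul_assoc, hsq, one_mul]
  -- the auxiliary sequence
  set A : ℕ → ℝ := fun j => if j ≤ d then a j else 0 with hA
  have hQA : Qq A := by
    refine ⟨fun j => ?_, fun j => ?_, fun j hj => ?_⟩
    · by_cases h : j ≤ d
      · simp [hA, h, (hpos j h).le]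
      · simp [hA, h]
    · by_cases h : j + 2 ≤ d
      · have h1 : j ≤ d := by omega
        have h2 : j + 1 ≤ d := by omega
        simp only [hA, if_pos h, if_pos h1, if_pos h2]
        have := hlc (j+1) (by omega) (by omega)
        simpa using this
      · simp only [hA, if_neg h]
        have h1 : (0:ℝ) ≤ if j ≤ d then a j else 0 := by
          by_cases hj : j ≤ d
          · simp [hj, (hpos j hj).le]
          · simp [hj]
        nlinarith [sq_nonneg (if j + 1 ≤ d then a (j+1) else 0)]
    · simp only [hA] at hj ⊢
      have hjd : ¬ j ≤ d := by
        intro hjd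
        rw [if_pos hjd] at hj
        exact absurd hj (ne_of_gt (hpos j hjd))
      rw [if_neg (by omega : ¬ j + 1 ≤ d)]
  have S_eq_B : ∀ n : ℕ,
      (∑ j ∈ Finset.range (d+1), a j * (n.choose j : ℝ)) = Bb A n := by
    intro n
    have e0 : (∑ j ∈ Finset.range (d+1), a j * (n.choose j : ℝ))
        = ∑ j ∈ Finset.range (d+1), A j * (n.choose j : ℝ) := by
      refine Finset.sum_congr rfl (fun j hj => ?_)
      rw [Finset.mem_range] at hj
      simp [hA, (by omega : j ≤ d)]
    have e1 : (∑ j ∈ Finset.range (d+1), A j * (n.choose j : ℝ))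
        = ∑ j ∈ Finset.range (max (d+1) (n+1)), A j * (n.choose j : ℝ) := by
      refine Finset.sum_subset (Finset.range_subset_range.2 (le_max_left _ _)) (fun x _ hx => ?_)
      rw [Finset.mem_range] at hx
      have : ¬ x ≤ d := by omega
      simp [hA, this]
    have e2 : Bb A n = ∑ j ∈ Finset.range (max (d+1) (n+1)), A j * (n.choose j : ℝ) := by
      unfold Bb
      refine Finset.sum_subset (Finset.range_subset_range.2 (le_max_right _ _)) (fun x _ hx => ?_)
      rw [Finset.mem_range] at hx
      rw [Nat.choose_eq_zero_of_lt (by omega)]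
      simp
    rw [e0, e1, ← e2]
  refine ⟨fun m hm => ⟨part1 m hm, ?_⟩, hpos 0 (by omega), fun m hm => ?_⟩
  · -- a 0 ≤ sum
    rw [part1 m hm]
    have h0mem : 0 ∈ Finset.range (d+1) := Finset.mem_range.2 (by omega)
    have := Finset.single_le_sum (f := fun j => a j * ((m-1).choose j : ℝ))
      (fun i hi => mul_nonneg (hpos i (by
        rw [Finset.mem_range] at hi; omega)).le (Nat.cast_nonneg _)) h0mem
    simpa using this
  · -- log-concavity
    have hm1 : 1 ≤ m - 1 := by omega
    have hm0 : 1 ≤ m := by omega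
    have hmp : 1 ≤ m + 1 := by omega
    have r1 : -(m:ℝ) + 1 = -(((m-1 : ℕ)):ℝ) := by
      push_cast [Nat.cast_sub (by omega : 1 ≤ m)]
      ring
    have r2 : -(m:ℝ) - 1 = -(((m+1 : ℕ)):ℝ) := by
      push_cast
      ring
    rw [r1, r2, feval (m-1) hm1, feval m hm0, feval (m+1) hmp]
    rw [S_eq_B, S_eq_B, S_eq_B]
    have i1 : m - 1 - 1 = m - 2 := by omega
    have i2 : m + 1 - 1 = m := by omega
    have i3 : m - 1 = (m - 2) + 1 := by omega
    have i4 : m = (m - 2) + 2 := by omega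
    rw [i1, i2]
    have key := Bb_logconcave (m-2) A hQA
    rw [← i3, ← i4] at key
    calc (-1:ℝ)^d * Bb A (m-2) * ((-1:ℝ)^d * Bb A m)
        = ((-1:ℝ)^d * (-1:ℝ)^d) * (Bb A (m-2) * Bb A m) := by ring
      _ = Bb A (m-2) * Bb A m := by rw [hsq, one_mul]
      _ ≤ Bb A (m-1)^2 := key
      _ = ((-1:ℝ)^d * (-1:ℝ)^d) * Bb A (m-1)^2 := by rw [hsq, one_mul]
      _ = ((-1:ℝ)^d * Bb A (m-1))^2 := by ring
end
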